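/- arXiv:1410.7217 — 7 statements merged into one kernel-verified Lean document; each statement's English description precedes it below -/
import Mathlib

section
/- Let Z, M, R be vectors in R^n with Z^T Z > 0 and Z^T Z · M^T M − (Z^T M)^2 > 0. For fixed σ1, σ2 > 0 and δ ∈ (−1,1), let Σ be the 2×2 matrix with entries σ1², δσ1σ2, δσ1σ2, σ2². Then the maximizer of the log-likelihood ℓ(Θ) = −tr((Y − XΘ)Σ^{−1}(Y − XΘ)^T), where Y = (M R), X = (Z M), and Θ is a 2×2 matrix with Θ_{21} = 0, is given by Θ̂_{11} = Â = Z^T M / Z^T Z, Θ̂_{12} = Ĉ = (M^T M · Z^T R − Z^T M · M^T R)/(Z^T Z · M^T M − (Z^T M)^2) + δσ2 Z^T M/(σ1 Z^T Z), and Θ̂_{22} = B̂ = (Z^T Z · M^T R − Z^T M · Z^T R)/(Z^T Z · M^T M − (Z^T M)^2) − δσ2/σ1. -/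
/-!
With `κ = δσ2/σ1`, the Gaussian quadratic form of a residual row `(e₁, e₂)` factors as
`e₁²/σ1² + (e₂ - κ e₁)²/(σ2²(1 - δ²))`: the second error is regressed on the first.
When `Θ₂₁ = 0` we have `e₁ = M - A Z` and `e₂ - κ e₁ = R - (C - κA) Z - (B + κ) M`, so `-ℓ` is a
positive combination of the residual sums of squares of two ordinary least-squares problems,
in the independent parameters `A` and `(C - κA, B + κ)`. Each is uniquely minimized at its OLS
solution (normal equations and Pythagoras; uniqueness because the Gram determinant is positive),
and undoing the change of parameters gives `Θ̂`.
-/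

open Matrix

section LeastSquares

variable {ι : Type*} [Fintype ι]

theorem dotProduct_self_add_of_dotProduct_eq_zero {u v : ι → ℝ} (h : u ⬝ᵥ v = 0) :
    (u + v) ⬝ᵥ (u + v) = u ⬝ᵥ u + v ⬝ᵥ v := by
  rw [add_dotProduct, dotProduct_add, dotProduct_add, dotProduct_comm v u, h]
  ring

variable (z m y : ι → ℝ)

noncomputable def olsSlope : ℝ := z ⬝ᵥ y / z ⬝ᵥ z

def gramDet : ℝ := z ⬝ᵥ z * m ⬝ᵥ m - (z ⬝ᵥ m) ^ 2

-- Least-squares coefficients of `y` on the regressors `z, m`, by Cramer's rule.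
noncomputable def olsFst : ℝ := (m ⬝ᵥ m * z ⬝ᵥ y - z ⬝ᵥ m * m ⬝ᵥ y) / gramDet z m

noncomputable def olsSnd : ℝ := (z ⬝ᵥ z * m ⬝ᵥ y - z ⬝ᵥ m * z ⬝ᵥ y) / gramDet z m

variable {z m}

theorem dotProduct_self_sub_smul_eq_olsSlope_add (hz : z ⬝ᵥ z ≠ 0) (a : ℝ) :
    (y - a • z) ⬝ᵥ (y - a • z) =
      (y - olsSlope z y • z) ⬝ᵥ (y - olsSlope z y • z) + (olsSlope z y - a) ^ 2 * z ⬝ᵥ z := by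
  have hnormal : z ⬝ᵥ (y - olsSlope z y • z) = 0 := by
    rw [dotProduct_sub, dotProduct_smul, smul_eq_mul, olsSlope, div_mul_cancel₀ _ hz, sub_self]
  rw [show y - a • z = (y - olsSlope z y • z) + (olsSlope z y - a) • z by module,
    dotProduct_self_add_of_dotProduct_eq_zero]
  · rw [smul_dotProduct, dotProduct_smul, smul_eq_mul, smul_eq_mul]
    ring
  · rw [dotProduct_smul, dotProduct_comm, hnormal, smul_zero]

theorem ols_normal_equations (hD : gramDet z m ≠ 0) :
    z ⬝ᵥ (y - olsFst z m y • z - olsSnd z m y • m) = 0 ∧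
      m ⬝ᵥ (y - olsFst z m y • z - olsSnd z m y • m) = 0 := by
  simp only [dotProduct_sub, dotProduct_smul, smul_eq_mul, olsFst, olsSnd, dotProduct_comm m z]
  constructor <;> field_simp <;> rw [gramDet] <;> ring

theorem dotProduct_self_sub_smul_sub_smul_eq_ols_add (hD : gramDet z m ≠ 0) (c b : ℝ) :
    (y - c • z - b • m) ⬝ᵥ (y - c • z - b • m) =
      (y - olsFst z m y • z - olsSnd z m y • m) ⬝ᵥ (y - olsFst z m y • z - olsSnd z m y • m) +
        ((olsFst z m y - c) • z + (olsSnd z m y - b) • m) ⬝ᵥ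
          ((olsFst z m y - c) • z + (olsSnd z m y - b) • m) := by
  obtain ⟨hnormal_z, hnormal_m⟩ := ols_normal_equations y hD
  rw [show y - c • z - b • m = (y - olsFst z m y • z - olsSnd z m y • m) +
      ((olsFst z m y - c) • z + (olsSnd z m y - b) • m) by module,
    dotProduct_self_add_of_dotProduct_eq_zero]
  rw [dotProduct_add, dotProduct_smul, dotProduct_smul, dotProduct_comm, hnormal_z,
    dotProduct_comm, hnormal_m, smul_zero, smul_zero, add_zero]

theorem eq_zero_of_smul_add_smul_eq_zero (hD : gramDet z m ≠ 0) {c b : ℝ}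
    (h : c • z + b • m = 0) : c = 0 ∧ b = 0 := by
  have hz : c * z ⬝ᵥ z + b * z ⬝ᵥ m = 0 := by
    simpa only [dotProduct_add, dotProduct_smul, smul_eq_mul, dotProduct_zero] using
      congrArg (z ⬝ᵥ ·) h
  have hm : c * z ⬝ᵥ m + b * m ⬝ᵥ m = 0 := by
    simpa only [dotProduct_add, dotProduct_smul, dotProduct_comm m z, smul_eq_mul,
      dotProduct_zero] using congrArg (m ⬝ᵥ ·) h
  have hc : c * gramDet z m = 0 := by
    rw [gramDet]; linear_combination (m ⬝ᵥ m) * hz - (z ⬝ᵥ m) * hm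
  have hb : b * gramDet z m = 0 := by
    rw [gramDet]; linear_combination (z ⬝ᵥ z) * hm - (z ⬝ᵥ m) * hz
  exact ⟨(mul_eq_zero.mp hc).resolve_right hD, (mul_eq_zero.mp hb).resolve_right hD⟩

variable (z m)

noncomputable def weightedRSS (r : ι → ℝ) (α β a c b : ℝ) : ℝ :=
  α * ((m - a • z) ⬝ᵥ (m - a • z)) + β * ((r - c • z - b • m) ⬝ᵥ (r - c • z - b • m))

variable {z m}

theorem weightedRSS_ols_le (r : ι → ℝ) (hz : 0 < z ⬝ᵥ z) (hD : gramDet z m ≠ 0)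
    {α β : ℝ} (hα : 0 < α) (hβ : 0 < β) (a c b : ℝ) :
    weightedRSS z m r α β (olsSlope z m) (olsFst z m r) (olsSnd z m r) ≤
        weightedRSS z m r α β a c b ∧
      (weightedRSS z m r α β a c b =
          weightedRSS z m r α β (olsSlope z m) (olsFst z m r) (olsSnd z m r) →
        a = olsSlope z m ∧ c = olsFst z m r ∧ b = olsSnd z m r) := by
  set d := (olsFst z m r - c) • z + (olsSnd z m r - b) • m
  have hdecomp : weightedRSS z m r α β a c b =
      weightedRSS z m r α β (olsSlope z m) (olsFst z m r) (olsSnd z m r) +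
        (α * ((olsSlope z m - a) ^ 2 * z ⬝ᵥ z) + β * d ⬝ᵥ d) := by
    rw [weightedRSS, weightedRSS, dotProduct_self_sub_smul_eq_olsSlope_add m hz.ne',
      dotProduct_self_sub_smul_sub_smul_eq_ols_add r hD]
    ring
  have hslope : 0 ≤ (olsSlope z m - a) ^ 2 * z ⬝ᵥ z := by positivity
  have hd : 0 ≤ d ⬝ᵥ d := Finset.sum_nonneg fun i _ => mul_self_nonneg (d i)
  refine ⟨by rw [hdecomp]; nlinarith, fun heq => ?_⟩
  have hslope0 : (olsSlope z m - a) ^ 2 * z ⬝ᵥ z = 0 := by nlinarith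
  have hd0 : d ⬝ᵥ d = 0 := by nlinarith
  obtain ⟨hc, hb⟩ := eq_zero_of_smul_add_smul_eq_zero hD (dotProduct_self_eq_zero.mp hd0)
  refine ⟨?_, by linarith, by linarith⟩
  have := pow_eq_zero_iff two_ne_zero |>.mp ((mul_eq_zero.mp hslope0).resolve_right hz.ne')
  linarith

end LeastSquares

theorem trace_mul_inv_mul_transpose_fin_two {ι : Type*} [Fintype ι] (E : Matrix ι (Fin 2) ℝ)
    {σ1 σ2 δ : ℝ} (hσ1 : σ1 ≠ 0) (hσ2 : σ2 ≠ 0) (hδ : 1 - δ ^ 2 ≠ 0) :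
    trace (E * !![σ1 ^ 2, δ * σ1 * σ2; δ * σ1 * σ2, σ2 ^ 2]⁻¹ * Eᵀ) =
      (σ1 ^ 2)⁻¹ * (Eᵀ 0 ⬝ᵥ Eᵀ 0) +
        (σ2 ^ 2 * (1 - δ ^ 2))⁻¹ *
          ((Eᵀ 1 - (δ * σ2 / σ1) • Eᵀ 0) ⬝ᵥ (Eᵀ 1 - (δ * σ2 / σ1) • Eᵀ 0)) := by
  rw [Matrix.inv_def, Matrix.adjugate_fin_two_of, Matrix.det_fin_two_of, Ring.inverse_eq_inv']
  simp only [trace, diag, mul_apply, Fin.sum_univ_two, transpose_apply, Matrix.smul_apply,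
    of_apply, cons_val', cons_val_zero, cons_val_one, empty_val', cons_val_fin_one,
    dotProduct, Pi.sub_apply, Pi.smul_apply, smul_eq_mul, Finset.mul_sum, ← Finset.sum_add_distrib]
  refine Finset.sum_congr rfl fun i _ => ?_
  field_simp
  ring

theorem trace_mediation_residual {n : ℕ} {Z M R : Fin n → ℝ} {σ1 σ2 δ : ℝ}
    (hσ1 : σ1 ≠ 0) (hσ2 : σ2 ≠ 0) (hδ : 1 - δ ^ 2 ≠ 0) {Y X : Matrix (Fin n) (Fin 2) ℝ}
    (hY : Y = of fun i j => if j = 0 then M i else R i)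
    (hX : X = of fun i j => if j = 0 then Z i else M i)
    {Θ : Matrix (Fin 2) (Fin 2) ℝ} (hΘ : Θ 1 0 = 0) :
    trace ((Y - X * Θ) * !![σ1 ^ 2, δ * σ1 * σ2; δ * σ1 * σ2, σ2 ^ 2]⁻¹ * (Y - X * Θ)ᵀ) =
      weightedRSS Z M R (σ1 ^ 2)⁻¹ (σ2 ^ 2 * (1 - δ ^ 2))⁻¹
        (Θ 0 0) (Θ 0 1 - δ * σ2 / σ1 * Θ 0 0) (Θ 1 1 + δ * σ2 / σ1) := by
  have hcol0 : (Y - X * Θ)ᵀ 0 = M - Θ 0 0 • Z := by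
    subst hY hX
    funext i
    simp only [transpose_apply, Matrix.sub_apply, of_apply, ↓reduceIte, mul_apply, ite_mul,
      Fin.sum_univ_two, one_ne_zero, hΘ, mul_zero, add_zero, Pi.sub_apply, Pi.smul_apply,
      smul_eq_mul]
    ring
  have hcol1 : (Y - X * Θ)ᵀ 1 = R - Θ 0 1 • Z - Θ 1 1 • M := by
    subst hY hX
    funext i
    simp only [transpose_apply, Matrix.sub_apply, of_apply, one_ne_zero, ↓reduceIte, mul_apply,
      ite_mul, Fin.sum_univ_two, Pi.sub_apply, Pi.smul_apply, smul_eq_mul]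
    ring
  rw [trace_mul_inv_mul_transpose_fin_two _ hσ1 hσ2 hδ, hcol0, hcol1, weightedRSS]
  congr 3 <;> module

/-- Theorem 1 of Zhao–Luo: the constrained MLE of the single-level mediation SEM
with known error covariance `Σ = [[σ1², δσ1σ2],[δσ1σ2, σ2²]]`. -/
theorem stmt_0 {n : ℕ} (Z M R : Fin n → ℝ) (σ1 σ2 δ : ℝ)
    (hσ1 : 0 < σ1) (hσ2 : 0 < σ2) (hδ : δ ∈ Set.Ioo (-1 : ℝ) 1)
    (hZZ : 0 < ∑ i, Z i * Z i)
    (hD : 0 < (∑ i, Z i * Z i) * (∑ i, M i * M i) - (∑ i, Z i * M i) ^ 2)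
    (Sig : Matrix (Fin 2) (Fin 2) ℝ)
    (hSig : Sig = !![σ1 ^ 2, δ * σ1 * σ2; δ * σ1 * σ2, σ2 ^ 2])
    (Y X : Matrix (Fin n) (Fin 2) ℝ)
    (hY : Y = Matrix.of fun i j => if j = 0 then M i else R i)
    (hX : X = Matrix.of fun i j => if j = 0 then Z i else M i)
    (ℓ : Matrix (Fin 2) (Fin 2) ℝ → ℝ)
    (hℓ : ℓ = fun Θ => -Matrix.trace ((Y - X * Θ) * Sig⁻¹ * (Y - X * Θ)ᵀ))
    (Θhat : Matrix (Fin 2) (Fin 2) ℝ)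
    (hΘhat : Θhat =
      !![(∑ i, Z i * M i) / (∑ i, Z i * Z i),
          ((∑ i, M i * M i) * (∑ i, Z i * R i) - (∑ i, Z i * M i) * (∑ i, M i * R i)) /
              ((∑ i, Z i * Z i) * (∑ i, M i * M i) - (∑ i, Z i * M i) ^ 2) +
            δ * σ2 * (∑ i, Z i * M i) / (σ1 * (∑ i, Z i * Z i));
          0,
          ((∑ i, Z i * Z i) * (∑ i, M i * R i) - (∑ i, Z i * M i) * (∑ i, Z i * R i)) /
              ((∑ i, Z i * Z i) * (∑ i, M i * M i) - (∑ i, Z i * M i) ^ 2) -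
            δ * σ2 / σ1]) :
    Θhat 1 0 = 0 ∧
      ∀ Θ : Matrix (Fin 2) (Fin 2) ℝ, Θ 1 0 = 0 →
        ℓ Θ ≤ ℓ Θhat ∧ (ℓ Θ = ℓ Θhat → Θ = Θhat) := by
  obtain ⟨hδlo, hδhi⟩ := hδ
  have hδ2 : 0 < 1 - δ ^ 2 := by nlinarith
  have hℓ_eq : ∀ Θ : Matrix (Fin 2) (Fin 2) ℝ, Θ 1 0 = 0 →
      ℓ Θ = -weightedRSS Z M R (σ1 ^ 2)⁻¹ (σ2 ^ 2 * (1 - δ ^ 2))⁻¹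
        (Θ 0 0) (Θ 0 1 - δ * σ2 / σ1 * Θ 0 0) (Θ 1 1 + δ * σ2 / σ1) := fun Θ hΘ => by
    rw [hℓ, hSig]
    beta_reduce
    rw [neg_inj, trace_mediation_residual hσ1.ne' hσ2.ne' hδ2.ne' hY hX hΘ]
  have hΘhat10 : Θhat 1 0 = 0 := by rw [hΘhat]; rfl
  have ha : Θhat 0 0 = olsSlope Z M := by rw [hΘhat]; rfl
  have hc : Θhat 0 1 - δ * σ2 / σ1 * Θhat 0 0 = olsFst Z M R := by
    rw [ha, hΘhat]
    simp only [of_apply, cons_val', cons_val_one, cons_val_fin_one, cons_val_zero, olsSlope,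
      dotProduct, olsFst, gramDet]
    ring
  have hb : Θhat 1 1 + δ * σ2 / σ1 = olsSnd Z M R := by
    rw [hΘhat]; simp [olsSnd, gramDet, dotProduct]
  refine ⟨hΘhat10, fun Θ hΘ => ?_⟩
  obtain ⟨hle, huniq⟩ := weightedRSS_ols_le R hZZ hD.ne' (α := (σ1 ^ 2)⁻¹)
    (β := (σ2 ^ 2 * (1 - δ ^ 2))⁻¹) (by positivity) (by positivity)
    (Θ 0 0) (Θ 0 1 - δ * σ2 / σ1 * Θ 0 0) (Θ 1 1 + δ * σ2 / σ1)
  rw [hℓ_eq Θ hΘ, hℓ_eq Θhat hΘhat10, hc, hb, ha]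
  refine ⟨neg_le_neg hle, fun heq => ?_⟩
  obtain ⟨h00, h01, h11⟩ := huniq (neg_inj.mp heq)
  rw [← ha] at h00
  rw [← hc, h00, sub_left_inj] at h01
  rw [← hb, add_left_inj] at h11
  rw [eta_fin_two Θ, eta_fin_two Θhat, hΘ, hΘhat10, h00, h01, h11]
end

section
/- Let Z, M, R be vectors in R^n with Z^T Z > 0 and the Gram matrix of (Z, M) invertible. Define = Z^T M/Z^T Z, Ĉ' = Z^T R/Z^T Z, Ĉ(δ) and B̂(δ) as in the CMA estimator (Theorem 1). Then for every δ, the difference estimator Ĉ' − Ĉ(δ) equals the product estimator Â·B̂(δ), i.e. Z^T R/Z^T Z − Ĉ(δ) = Â B̂(δ). -/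
/-!
Â·B̂(δ) and Ĉ' − Ĉ(δ) both move by −Â·δσ₂/σ₁ as δ varies, so it suffices to treat δ = 0. There
the claim is the omitted-variable-bias formula of least squares: the coefficient of Z in the
regression of R on Z alone exceeds its coefficient in the regression on (Z, M) by the coefficient
of M on Z times the coefficient of M in the joint regression. Clearing the denominators Z^T Z and
D turns it into a polynomial identity in the Gram entries.
-/

theorem omitted_variable_bias {K : Type*} [Field K] {zz mm zm zr mr : K} (hzz : zz ≠ 0)
    (hD : zz * mm - zm ^ 2 ≠ 0) :
    zr / zz - (mm * zr - zm * mr) / (zz * mm - zm ^ 2) =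
      zm / zz * ((zz * mr - zm * zr) / (zz * mm - zm ^ 2)) := by
  field_simp
  ring

theorem stmt_2_general {n : ℕ} (Z M R : Fin n → ℝ) (σ1 σ2 : ℝ)
    (hZZ : 0 < ∑ i, Z i * Z i)
    (hD : 0 < (∑ i, Z i * Z i) * (∑ i, M i * M i) - (∑ i, Z i * M i) ^ 2)
    (Ahat Chat' : ℝ) (Chat Bhat : ℝ → ℝ)
    (hA : Ahat = (∑ i, Z i * M i) / (∑ i, Z i * Z i))
    (hC' : Chat' = (∑ i, Z i * R i) / (∑ i, Z i * Z i))
    (hC : Chat = fun δ =>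
      ((∑ i, M i * M i) * (∑ i, Z i * R i) - (∑ i, Z i * M i) * (∑ i, M i * R i)) /
          ((∑ i, Z i * Z i) * (∑ i, M i * M i) - (∑ i, Z i * M i) ^ 2) +
        δ * σ2 * (∑ i, Z i * M i) / (σ1 * (∑ i, Z i * Z i)))
    (hB : Bhat = fun δ =>
      ((∑ i, Z i * Z i) * (∑ i, M i * R i) - (∑ i, M i * Z i) * (∑ i, Z i * R i)) /
          ((∑ i, Z i * Z i) * (∑ i, M i * M i) - (∑ i, Z i * M i) ^ 2) -
        δ * σ2 / σ1) :
    ∀ δ : ℝ, Chat' - Chat δ = Ahat * Bhat δ := by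
  intro δ
  have hMZ : ∑ i, M i * Z i = ∑ i, Z i * M i := by simp only [mul_comm]
  have hshift : δ * σ2 * (∑ i, Z i * M i) / (σ1 * ∑ i, Z i * Z i) =
      δ * σ2 / σ1 * ((∑ i, Z i * M i) / ∑ i, Z i * Z i) := by
    rw [mul_div_mul_comm]
  subst hA hC' hC hB
  beta_reduce
  rw [hMZ, hshift]
  linear_combination omitted_variable_bias (zr := ∑ i, Z i * R i) (mr := ∑ i, M i * R i)
    hZZ.ne' hD.ne'

/-- The difference estimator `Ĉ' − Ĉ(δ)` equals the product estimator `Â·B̂(δ)` for every δ. -/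
theorem stmt_2 {n : ℕ} (Z M R : Fin n → ℝ) (σ1 σ2 : ℝ) (hσ1 : 0 < σ1) (hσ2 : 0 < σ2)
    (hZZ : 0 < ∑ i, Z i * Z i)
    (hD : 0 < (∑ i, Z i * Z i) * (∑ i, M i * M i) - (∑ i, Z i * M i) ^ 2)
    (Ahat Chat' : ℝ) (Chat Bhat : ℝ → ℝ)
    (hA : Ahat = (∑ i, Z i * M i) / (∑ i, Z i * Z i))
    (hC' : Chat' = (∑ i, Z i * R i) / (∑ i, Z i * Z i))
    (hC : Chat = fun δ =>
      ((∑ i, M i * M i) * (∑ i, Z i * R i) - (∑ i, Z i * M i) * (∑ i, M i * R i)) /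
          ((∑ i, Z i * Z i) * (∑ i, M i * M i) - (∑ i, Z i * M i) ^ 2) +
        δ * σ2 * (∑ i, Z i * M i) / (σ1 * (∑ i, Z i * Z i)))
    (hB : Bhat = fun δ =>
      ((∑ i, Z i * Z i) * (∑ i, M i * R i) - (∑ i, M i * Z i) * (∑ i, Z i * R i)) /
          ((∑ i, Z i * Z i) * (∑ i, M i * M i) - (∑ i, Z i * M i) ^ 2) -
        δ * σ2 / σ1) :
    ∀ δ : ℝ, Chat' - Chat δ = Ahat * Bhat δ :=
  stmt_2_general Z M R σ1 σ2 hZZ hD Ahat Chat' Chat Bhat hA hC' hC hB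
end

section
/- Fix σ1 > 0, and real numbers s12 and s22 with σ1² s22 − s12² > 0. For each δ ∈ (−1, 1), the system of equations Bσ1² + δσ1σ2 = s12 and B²σ1² + σ2² + 2Bδσ1σ2 = s22 in unknowns (B, σ2) with σ2 > 0 has the unique solution B = s12/σ1² − (δ/(σ1²√(1−δ²)))·√(σ1² s22 − s12²) and σ2² = (σ1² s22 − s12²)/(σ1²(1−δ²)). -/
/-!
Given the first equation, `σ1² s22 - s12² = σ1² σ2² (1 - δ²)` is a polynomial identity, so the
second equation pins down `σ2²`; as `σ2 > 0` this fixes `σ1 σ2 √(1 - δ²) = √(σ1² s22 - s12²)`,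
and the first equation is then linear in `B`.
-/

lemma moment_equations_iff {K : Type*} [Field K] {σ1 σ2 δ B s12 s22 : K} (hσ1 : σ1 ≠ 0) :
    (B * σ1 ^ 2 + δ * σ1 * σ2 = s12 ∧ B ^ 2 * σ1 ^ 2 + σ2 ^ 2 + 2 * B * δ * σ1 * σ2 = s22) ↔
      (B * σ1 ^ 2 + δ * σ1 * σ2 = s12 ∧
        σ2 ^ 2 * (σ1 ^ 2 * (1 - δ ^ 2)) = σ1 ^ 2 * s22 - s12 ^ 2) := by
  refine and_congr_right fun h₁ => ?_
  subst h₁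
  constructor
  · rintro rfl
    ring
  · intro h₂
    refine mul_left_cancel₀ (pow_ne_zero 2 hσ1) ?_
    linear_combination h₂

lemma sqrt_eq_mul_of_sq_eq_div {σ1 σ2 c D : ℝ} (hσ1 : 0 < σ1) (hσ2 : 0 ≤ σ2) (hc : 0 < c)
    (h : σ2 ^ 2 = D / (σ1 ^ 2 * c)) : √D = σ1 * σ2 * √c := by
  have hσ2' : σ2 = √D / (σ1 * √c) := by
    rw [← Real.sqrt_sq hσ2, h, Real.sqrt_div' _ (by positivity), Real.sqrt_mul' _ hc.le,
      Real.sqrt_sq hσ1.le]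
  rw [eq_div_iff (by positivity)] at hσ2'
  linear_combination -hσ2'

theorem stmt_4_general (σ1 s12 s22 δ : ℝ) (hσ1 : 0 < σ1)
    (hδ : δ ∈ Set.Ioo (-1 : ℝ) 1) :
    ∀ B σ2 : ℝ, 0 < σ2 →
      ((B * σ1 ^ 2 + δ * σ1 * σ2 = s12 ∧
          B ^ 2 * σ1 ^ 2 + σ2 ^ 2 + 2 * B * δ * σ1 * σ2 = s22) ↔
        (B = s12 / σ1 ^ 2 -
            δ / (σ1 ^ 2 * Real.sqrt (1 - δ ^ 2)) * Real.sqrt (σ1 ^ 2 * s22 - s12 ^ 2) ∧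
          σ2 ^ 2 = (σ1 ^ 2 * s22 - s12 ^ 2) / (σ1 ^ 2 * (1 - δ ^ 2)))) := by
  intro B σ2 hσ2
  have hc : 0 < 1 - δ ^ 2 := by nlinarith [hδ.1, hδ.2]
  rw [moment_equations_iff hσ1.ne', ← eq_div_iff (by positivity)]
  refine and_congr_left fun hσ2sq => ?_
  rw [sqrt_eq_mul_of_sq_eq_div hσ1 hσ2.le hc hσ2sq]
  field_simp
  constructor <;> intro h <;> linear_combination h

/-- Identification of `(B, σ2)` from the reduced-form moments given δ (eqs (13)-(14)). -/
theorem stmt_4 (σ1 s12 s22 δ : ℝ) (hσ1 : 0 < σ1)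
    (hpos : 0 < σ1 ^ 2 * s22 - s12 ^ 2) (hδ : δ ∈ Set.Ioo (-1 : ℝ) 1) :
    ∀ B σ2 : ℝ, 0 < σ2 →
      ((B * σ1 ^ 2 + δ * σ1 * σ2 = s12 ∧
          B ^ 2 * σ1 ^ 2 + σ2 ^ 2 + 2 * B * δ * σ1 * σ2 = s22) ↔
        (B = s12 / σ1 ^ 2 -
            δ / (σ1 ^ 2 * Real.sqrt (1 - δ ^ 2)) * Real.sqrt (σ1 ^ 2 * s22 - s12 ^ 2) ∧
          σ2 ^ 2 = (σ1 ^ 2 * s22 - s12 ^ 2) / (σ1 ^ 2 * (1 - δ ^ 2)))) :=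
  stmt_4_general σ1 s12 s22 δ hσ1 hδ
end

section
/- Fix σ1 > 0 and reduced-form moments s12, s22 with σ1² s22 − s12² > 0. For δ ∈ (−1,1), let B(δ) and σ2(δ) be the unique solution to Bσ1² + δσ1σ2 = s12 and B²σ1² + σ2² + 2Bδσ1σ2 = s22 with σ2 > 0. Then the map δ ↦ (B(δ), σ2(δ), δ) is injective, and (B(δ), σ2(δ)) is never constant in δ; in particular, the three parameters (B, σ2, δ) cannot all be recovered from the two equations: for any two distinct δ, δ' ∈ (−1,1), both triples (B(δ), σ2(δ), δ) and (B(δ'), σ2(δ'), δ') satisfy the same two moment equations. -/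
/-!
Put `c = √(1 - δ²)` and `t = √(σ1² s22 - s12²)`. Then `σ2(δ) = t / (σ1 c)` and
`B(δ) = s12 / σ1² - (t / σ1²) · δ / c`, and both moment equations reduce to `c² = 1 - δ²`
and `t² = σ1² s22 - s12²`, so every `δ` gives a solution. Since `t > 0`, `B` determines
`δ / √(1 - δ²) = tan (arcsin δ)`, which is strictly increasing on `(-1, 1)`; hence distinct `δ`
give distinct `B`.
-/

open Real Set

theorem strictMonoOn_div_sqrt_one_sub_sq :
    StrictMonoOn (fun x : ℝ => x / √(1 - x ^ 2)) (Ioo (-1) 1) := by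
  have hmaps : MapsTo arcsin (Ioo (-1) 1) (Ioo (-(π / 2)) (π / 2)) := fun x hx =>
    ⟨neg_pi_div_two_lt_arcsin.2 hx.1, arcsin_lt_pi_div_two.2 hx.2⟩
  have h := strictMonoOn_tan.comp (strictMonoOn_arcsin.mono Ioo_subset_Icc_self) hmaps
  simpa only [Function.comp_def, tan_arcsin] using h

theorem moment_eqs_of_sq_eq {σ1 s12 s22 δ c t : ℝ} (hσ1 : σ1 ≠ 0) (hc : c ≠ 0)
    (hc2 : c ^ 2 = 1 - δ ^ 2) (ht2 : t ^ 2 = σ1 ^ 2 * s22 - s12 ^ 2) :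
    let B := s12 / σ1 ^ 2 - δ / (σ1 ^ 2 * c) * t
    let σ2 := t / (σ1 * c)
    B * σ1 ^ 2 + δ * σ1 * σ2 = s12 ∧
      B ^ 2 * σ1 ^ 2 + σ2 ^ 2 + 2 * B * δ * σ1 * σ2 = s22 := by
  intro B σ2
  constructor
  · simp only [B, σ2]; field_simp; ring
  · simp only [B, σ2]; field_simp
    linear_combination (-t ^ 2) * hc2 + c ^ 2 * ht2

/-- Nonidentifiability of δ: each δ ∈ (−1,1) yields a distinct triple `(B(δ), σ2(δ), δ)`
satisfying the same two reduced-form moment equations. -/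
theorem stmt_5 (σ1 s12 s22 : ℝ) (hσ1 : 0 < σ1)
    (hpos : 0 < σ1 ^ 2 * s22 - s12 ^ 2)
    (B σ2 : ℝ → ℝ)
    (hB : B = fun δ => s12 / σ1 ^ 2 -
      δ / (σ1 ^ 2 * Real.sqrt (1 - δ ^ 2)) * Real.sqrt (σ1 ^ 2 * s22 - s12 ^ 2))
    (hσ2 : σ2 = fun δ => Real.sqrt ((σ1 ^ 2 * s22 - s12 ^ 2) / (σ1 ^ 2 * (1 - δ ^ 2)))) :
    -- the solution map is injective
    Set.InjOn (fun δ => (B δ, σ2 δ, δ)) (Set.Ioo (-1 : ℝ) 1) ∧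
    -- (B(δ), σ2(δ)) is never constant in δ
    (∀ δ ∈ Set.Ioo (-1 : ℝ) 1, ∀ δ' ∈ Set.Ioo (-1 : ℝ) 1, δ ≠ δ' →
      (B δ, σ2 δ) ≠ (B δ', σ2 δ')) ∧
    -- every δ produces a solution of the same two moment equations
    (∀ δ ∈ Set.Ioo (-1 : ℝ) 1,
      0 < σ2 δ ∧
      B δ * σ1 ^ 2 + δ * σ1 * σ2 δ = s12 ∧
      B δ ^ 2 * σ1 ^ 2 + σ2 δ ^ 2 + 2 * B δ * δ * σ1 * σ2 δ = s22) := by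
  subst hB hσ2
  set t := √(σ1 ^ 2 * s22 - s12 ^ 2)
  have ht : 0 < t := sqrt_pos.2 hpos
  refine ⟨fun δ _ δ' _ h => congrArg (·.2.2) h, ?_, ?_⟩
  · intro δ hδ δ' hδ' hne h
    refine hne (strictMonoOn_div_sqrt_one_sub_sq.injOn hδ hδ' ?_)
    have hscaled : δ / √(1 - δ ^ 2) * (t / σ1 ^ 2) = δ' / √(1 - δ' ^ 2) * (t / σ1 ^ 2) := by
      have := congrArg Prod.fst h
      beta_reduce at this
      linear_combination (-1 : ℝ) * this
    exact mul_right_cancel₀ (by positivity) hscaled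
  · intro δ hδ
    have hδ2 : 0 < 1 - δ ^ 2 := by nlinarith [hδ.1, hδ.2]
    have hc : 0 < √(1 - δ ^ 2) := sqrt_pos.2 hδ2
    beta_reduce
    rw [sqrt_div hpos.le, sqrt_mul (sq_nonneg _), sqrt_sq hσ1.le]
    exact ⟨by positivity, moment_eqs_of_sq_eq hσ1.ne' hc.ne' (sq_sqrt hδ2.le) (sq_sqrt hpos.le)⟩
end

section
/- Let V be the 3×3 matrix [[σ1²/q, δσ1σ2/q, 0],[δσ1σ2/q, σ2²(qA² + σ1² − qA²δ²)/(qσ1²), −Aσ2²(1−δ²)/σ1²],[0, −Aσ2²(1−δ²)/σ1², σ2²(1−δ²)/σ1²]] with σ1, σ2, q > 0 and δ ∈ (−1,1). Then V is symmetric positive definite. -/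
/-!
Completing the square in the quadratic form of `V` gives
`q σ1² xᵀ V x = σ1² (σ1 x₀ + δ σ2 x₁)² + σ1² σ2² (1 - δ²) x₁² + q σ2² (1 - δ²) (A x₁ - x₂)²`,
that is, `V = Lᵀ D L` with `D` a positive diagonal matrix and `L` invertible (`det L = -σ1`).
-/

open Matrix

theorem Matrix.posDef_transpose_mul_diagonal_mul {R n : Type*} [CommRing R] [IsDomain R]
    [PartialOrder R] [StarRing R] [TrivialStar R] [StarOrderedRing R]
    [Fintype n] [DecidableEq n] {d : n → R} (hd : ∀ i, 0 < d i) {L : Matrix n n R}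
    (hL : L.det ≠ 0) : (Lᵀ * diagonal d * L).PosDef := by
  simpa only [conjTranspose_eq_transpose_of_trivial] using
    (posDef_diagonal_iff.mpr hd).conjTranspose_mul_mul_same (mulVec_injective_of_det_ne_zero hL)

theorem cmaCovariance_eq_transpose_mul_diagonal_mul (A σ1 σ2 δ q : ℝ) (hσ1 : σ1 ≠ 0)
    (hq : q ≠ 0) :
    !![σ1 ^ 2 / q, δ * σ1 * σ2 / q, 0;
       δ * σ1 * σ2 / q,
         σ2 ^ 2 * (q * A ^ 2 + σ1 ^ 2 - q * A ^ 2 * δ ^ 2) / (q * σ1 ^ 2),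
         -(A * σ2 ^ 2 * (1 - δ ^ 2)) / σ1 ^ 2;
       0, -(A * σ2 ^ 2 * (1 - δ ^ 2)) / σ1 ^ 2,
         σ2 ^ 2 * (1 - δ ^ 2) / σ1 ^ 2] =
      !![σ1, δ * σ2, 0; 0, 1, 0; 0, A, -1]ᵀ *
        diagonal ![1 / q, σ2 ^ 2 * (1 - δ ^ 2) / q, σ2 ^ 2 * (1 - δ ^ 2) / σ1 ^ 2] *
        !![σ1, δ * σ2, 0; 0, 1, 0; 0, A, -1] := by
  ext i j
  fin_cases i <;> fin_cases j <;> simp [mul_apply, Fin.sum_univ_three] <;> field_simp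
  ring

/-- The asymptotic covariance matrix `V` of the CMA estimator is symmetric positive definite. -/
theorem stmt_9 (A σ1 σ2 δ q : ℝ) (hσ1 : 0 < σ1) (hσ2 : 0 < σ2)
    (hδ : δ ∈ Set.Ioo (-1 : ℝ) 1) (hq : 0 < q)
    (V : Matrix (Fin 3) (Fin 3) ℝ)
    (hV : V = !![σ1 ^ 2 / q, δ * σ1 * σ2 / q, 0;
                 δ * σ1 * σ2 / q,
                   σ2 ^ 2 * (q * A ^ 2 + σ1 ^ 2 - q * A ^ 2 * δ ^ 2) / (q * σ1 ^ 2),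
                   -(A * σ2 ^ 2 * (1 - δ ^ 2)) / σ1 ^ 2;
                 0, -(A * σ2 ^ 2 * (1 - δ ^ 2)) / σ1 ^ 2,
                   σ2 ^ 2 * (1 - δ ^ 2) / σ1 ^ 2]) :
    V.IsSymm ∧ V.PosDef := by
  have hδ' : 0 < 1 - δ ^ 2 := by nlinarith [hδ.1, hδ.2]
  have hV_pos : V.PosDef := by
    rw [hV, cmaCovariance_eq_transpose_mul_diagonal_mul A σ1 σ2 δ q hσ1.ne' hq.ne']
    refine posDef_transpose_mul_diagonal_mul (fun i => ?_) ?_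
    · fin_cases i <;> simp <;> positivity
    · simp [det_fin_three, hσ1.ne']
  exact ⟨isHermitian_iff_isSymm.mp hV_pos.isHermitian, hV_pos⟩
end

section
/- With V as in Theorem 2 (asymptotic covariance of (Â, Ĉ, B̂)), the asymptotic variance of the product estimator of the indirect effect, obtained by the delta method applied to the function (a,c,b) ↦ a·b at the point (A, C, B), equals B²σ1²/q + A²σ2²(1−δ²)/σ1². That is, the gradient g = (B, 0, A)^T satisfies g^T V g = B²σ1²/q + A²σ2²(1−δ²)/σ1². -/
open Matrix

theorem stmt_10_general (A B σ1 σ2 δ q : ℝ)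
    (V : Matrix (Fin 3) (Fin 3) ℝ)
    (hV : V = !![σ1 ^ 2 / q, δ * σ1 * σ2 / q, 0;
                 δ * σ1 * σ2 / q,
                   σ2 ^ 2 * (q * A ^ 2 + σ1 ^ 2 - q * A ^ 2 * δ ^ 2) / (q * σ1 ^ 2),
                   -(A * σ2 ^ 2 * (1 - δ ^ 2)) / σ1 ^ 2;
                 0, -(A * σ2 ^ 2 * (1 - δ ^ 2)) / σ1 ^ 2,
                   σ2 ^ 2 * (1 - δ ^ 2) / σ1 ^ 2])
    (g : Fin 3 → ℝ) (hg : g = ![B, 0, A]) :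
    g ⬝ᵥ (V *ᵥ g) = B ^ 2 * σ1 ^ 2 / q + A ^ 2 * σ2 ^ 2 * (1 - δ ^ 2) / σ1 ^ 2 := by
  subst hV hg
  simp only [dotProduct, mulVec, Fin.sum_univ_three, of_apply, cons_val', cons_val_fin_one,
    cons_val_zero, cons_val_one, cons_val, mul_zero, zero_mul, add_zero, zero_add]
  ring

/-- Delta-method variance of the product estimator: the gradient `g = (B, 0, A)ᵀ` of
`(a,c,b) ↦ a·b` at `(A,C,B)` satisfies `gᵀ V g = B²σ1²/q + A²σ2²(1−δ²)/σ1²`. -/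
theorem stmt_10 (A B σ1 σ2 δ q : ℝ) (hσ1 : 0 < σ1) (hσ2 : 0 < σ2)
    (hδ : δ ∈ Set.Ioo (-1 : ℝ) 1) (hq : 0 < q)
    (V : Matrix (Fin 3) (Fin 3) ℝ)
    (hV : V = !![σ1 ^ 2 / q, δ * σ1 * σ2 / q, 0;
                 δ * σ1 * σ2 / q,
                   σ2 ^ 2 * (q * A ^ 2 + σ1 ^ 2 - q * A ^ 2 * δ ^ 2) / (q * σ1 ^ 2),
                   -(A * σ2 ^ 2 * (1 - δ ^ 2)) / σ1 ^ 2;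
                 0, -(A * σ2 ^ 2 * (1 - δ ^ 2)) / σ1 ^ 2,
                   σ2 ^ 2 * (1 - δ ^ 2) / σ1 ^ 2])
    (g : Fin 3 → ℝ) (hg : g = ![B, 0, A]) :
    g ⬝ᵥ (V *ᵥ g) = B ^ 2 * σ1 ^ 2 / q + A ^ 2 * σ2 ^ 2 * (1 - δ ^ 2) / σ1 ^ 2 :=
  stmt_10_general A B σ1 σ2 δ q V hV g hg
end

section
/- Consider the Gaussian log-likelihood ℓ(Θ, Σ) = −n log det Σ − tr((Y − XΘ)Σ^{−1}(Y − XΘ)^T) for the model Y = XΘ + E with Y = (M R), X = (Z M), constraint Θ_{21} = 0, and Σ parametrized by (σ1, σ2, δ). Suppose the residual Gram matrix S = (Y − XΘ̂_0)^T(Y − XΘ̂_0)/n from the unconstrained fit is positive definite. Then for every fixed δ ∈ (−1, 1), the supremum of ℓ over (A, B, C, σ1², σ2²) is the same; i.e., the profile likelihood in δ is constant on (−1,1). -/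
/-!
Replacing `(C, B)` by `(C + A t, B - t)` multiplies the residual matrix `Y - X Θ` on the right
by the shear `T = [[1, t], [0, 1]]`, because the first column of `Y` and the second column of `X`
are both `M`. The Gaussian log-likelihood is invariant under `(E, Σ) ↦ (E T, Tᵀ Σ T)` for
`det T = 1`, and `Tᵀ Σ(σ₁, σ₂, δ) T` is again of the form `Σ(σ₁, σ₂', δ')`: `t` shifts the
correlation to any `δ'` while `σ₂'` keeps `det Σ = σ₁² σ₂² (1 - δ²)` fixed. Hence the set of
attainable likelihood values, and so its supremum, is the same for every `δ ∈ (-1, 1)`.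
-/

open Matrix

namespace ConstrainedSEM

def shear (t : ℝ) : Matrix (Fin 2) (Fin 2) ℝ := !![1, t; 0, 1]

lemma det_shear (t : ℝ) : (shear t).det = 1 := by
  simp [shear, det_fin_two_of]

def corrCov (σ₁ σ₂ δ : ℝ) : Matrix (Fin 2) (Fin 2) ℝ :=
  !![σ₁ ^ 2, δ * σ₁ * σ₂; δ * σ₁ * σ₂, σ₂ ^ 2]

noncomputable def gaussLogLik {n : ℕ} {k : Type*} [Fintype k] [DecidableEq k]
    (E : Matrix (Fin n) k ℝ) (V : Matrix k k ℝ) : ℝ :=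
  -(n : ℝ) * Real.log V.det - trace (E * V⁻¹ * Eᵀ)

lemma gaussLogLik_mul_transpose_mul_mul {n : ℕ} {k : Type*} [Fintype k] [DecidableEq k]
    (E : Matrix (Fin n) k ℝ) (V T : Matrix k k ℝ) (hT : T.det = 1) :
    gaussLogLik (E * T) (Tᵀ * V * T) = gaussLogLik E V := by
  have hTu : IsUnit T.det := by rw [hT]; exact isUnit_one
  have hTtu : IsUnit Tᵀ.det := by rwa [det_transpose]
  have hdet : (Tᵀ * V * T).det = V.det := by simp [hT]
  have htrace : E * T * (Tᵀ * V * T)⁻¹ * (E * T)ᵀ = E * V⁻¹ * Eᵀ :=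
    calc E * T * (Tᵀ * V * T)⁻¹ * (E * T)ᵀ
        = E * (T * T⁻¹) * V⁻¹ * ((Tᵀ⁻¹ * Tᵀ) * Eᵀ) := by
          simp only [Matrix.mul_inv_rev, transpose_mul, Matrix.mul_assoc]
      _ = E * V⁻¹ * Eᵀ := by
          rw [mul_nonsing_inv T hTu, nonsing_inv_mul Tᵀ hTtu, Matrix.mul_one, Matrix.one_mul]
  simp only [gaussLogLik, hdet, htrace]

lemma sub_mul_shear {n : ℕ} (Y X : Matrix (Fin n) (Fin 2) ℝ) (hYX : ∀ i, Y i 0 = X i 1)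
    (A C B t : ℝ) :
    (Y - X * !![A, C; 0, B]) * shear t = Y - X * !![A, C + A * t; 0, B - t] := by
  ext i j
  fin_cases j
  · simp [shear, mul_apply, Fin.sum_univ_two, hYX i]
  · simp only [shear, Fin.mk_one, Fin.isValue, mul_apply, Matrix.sub_apply, of_apply, cons_val',
      cons_val_fin_one, Fin.sum_univ_two, cons_val_zero, cons_val_one, hYX i, mul_zero, add_zero,
      mul_one]
    ring

lemma exists_shear_transpose_mul_corrCov_mul_shear {δ δ' : ℝ} (hδ : δ ∈ Set.Ioo (-1 : ℝ) 1)
    (hδ' : δ' ∈ Set.Ioo (-1 : ℝ) 1) {σ₁ σ₂ : ℝ} (hσ₁ : 0 < σ₁) (hσ₂ : 0 < σ₂) :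
    ∃ t σ₂', 0 < σ₂' ∧ (shear t)ᵀ * corrCov σ₁ σ₂ δ * shear t = corrCov σ₁ σ₂' δ' := by
  have hpos : 0 < 1 - δ ^ 2 := by nlinarith [hδ.1, hδ.2]
  have hpos' : 0 < 1 - δ' ^ 2 := by nlinarith [hδ'.1, hδ'.2]
  obtain ⟨σ₂', hσ₂', hdet⟩ : ∃ s, 0 < s ∧ s ^ 2 * (1 - δ' ^ 2) = σ₂ ^ 2 * (1 - δ ^ 2) := by
    refine ⟨σ₂ * √((1 - δ ^ 2) / (1 - δ' ^ 2)), by positivity, ?_⟩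
    rw [mul_pow, Real.sq_sqrt (div_pos hpos hpos').le]
    field_simp
  obtain ⟨t, ht⟩ : ∃ t, t * σ₁ = δ' * σ₂' - δ * σ₂ :=
    ⟨(δ' * σ₂' - δ * σ₂) / σ₁, div_mul_cancel₀ _ hσ₁.ne'⟩
  refine ⟨t, σ₂', hσ₂', ?_⟩
  ext i j
  fin_cases i <;> fin_cases j <;>
    simp only [shear, corrCov, Fin.zero_eta, Fin.isValue, Fin.mk_one, mul_apply, transpose_apply,
      of_apply, cons_val', cons_val_zero, cons_val_one, cons_val_fin_one, Fin.sum_univ_two, one_mul,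
      mul_one, zero_mul, mul_zero, add_zero]
  · linear_combination σ₁ * ht
  · linear_combination σ₁ * ht
  · linear_combination (t * σ₁ + δ' * σ₂' + δ * σ₂) * ht - hdet

def profileValues {n : ℕ} (Y X : Matrix (Fin n) (Fin 2) ℝ) (δ : ℝ) : Set ℝ :=
  {x | ∃ A C B σ₁ σ₂ : ℝ, 0 < σ₁ ∧ 0 < σ₂ ∧
    x = gaussLogLik (Y - X * !![A, C; 0, B]) (corrCov σ₁ σ₂ δ)}

lemma profileValues_subset {n : ℕ} (Y X : Matrix (Fin n) (Fin 2) ℝ) (hYX : ∀ i, Y i 0 = X i 1)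
    {δ δ' : ℝ} (hδ : δ ∈ Set.Ioo (-1 : ℝ) 1) (hδ' : δ' ∈ Set.Ioo (-1 : ℝ) 1) :
    profileValues Y X δ ⊆ profileValues Y X δ' := by
  rintro _ ⟨A, C, B, σ₁, σ₂, hσ₁, hσ₂, rfl⟩
  obtain ⟨t, σ₂', hσ₂', hcov⟩ := exists_shear_transpose_mul_corrCov_mul_shear hδ hδ' hσ₁ hσ₂
  refine ⟨A, C + A * t, B - t, σ₁, σ₂', hσ₁, hσ₂', ?_⟩
  rw [← sub_mul_shear Y X hYX, ← hcov, gaussLogLik_mul_transpose_mul_mul _ _ _ (det_shear t)]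

end ConstrainedSEM

theorem stmt_15_general {n : ℕ} (Z M R : Fin n → ℝ)
    (Y X : Matrix (Fin n) (Fin 2) ℝ)
    (hY : Y = Matrix.of fun i j => if j = 0 then M i else R i)
    (hX : X = Matrix.of fun i j => if j = 0 then Z i else M i)
    (ℓ : ℝ → ℝ → ℝ → ℝ → ℝ → ℝ → ℝ)
    (hℓ : ℓ = fun A C B σ1 σ2 δ =>
      -(n : ℝ) * Real.log (!![σ1 ^ 2, δ * σ1 * σ2; δ * σ1 * σ2, σ2 ^ 2] :
          Matrix (Fin 2) (Fin 2) ℝ).det -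
        Matrix.trace ((Y - X * !![A, C; 0, B]) *
          (!![σ1 ^ 2, δ * σ1 * σ2; δ * σ1 * σ2, σ2 ^ 2] : Matrix (Fin 2) (Fin 2) ℝ)⁻¹ *
          (Y - X * !![A, C; 0, B])ᵀ)) :
    ∀ δ₁ ∈ Set.Ioo (-1 : ℝ) 1, ∀ δ₂ ∈ Set.Ioo (-1 : ℝ) 1,
      sSup {x : ℝ | ∃ A C B σ1 σ2 : ℝ, 0 < σ1 ∧ 0 < σ2 ∧ x = ℓ A C B σ1 σ2 δ₁} =
        sSup {x : ℝ | ∃ A C B σ1 σ2 : ℝ, 0 < σ1 ∧ 0 < σ2 ∧ x = ℓ A C B σ1 σ2 δ₂} := by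
  intro δ₁ hδ₁ δ₂ hδ₂
  subst hℓ
  have hYX : ∀ i, Y i 0 = X i 1 := by simp [hY, hX]
  exact congrArg sSup <| (ConstrainedSEM.profileValues_subset Y X hYX hδ₁ hδ₂).antisymm
    (ConstrainedSEM.profileValues_subset Y X hYX hδ₂ hδ₁)

/-- Theorem 4 of Zhao–Luo (nonidentifiability of δ): the profile likelihood of the
constrained Gaussian SEM, maximized over `(A, C, B, σ1, σ2)`, is constant in `δ ∈ (−1,1)`,
provided the residual Gram matrix `S` of the unconstrained fit is positive definite. -/
theorem stmt_15 {n : ℕ} (hn : 0 < n) (Z M R : Fin n → ℝ)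
    (Y X : Matrix (Fin n) (Fin 2) ℝ)
    (hY : Y = Matrix.of fun i j => if j = 0 then M i else R i)
    (hX : X = Matrix.of fun i j => if j = 0 then Z i else M i)
    (Θ0 : Matrix (Fin 2) (Fin 2) ℝ) (hΘ0 : Θ0 = (Xᵀ * X)⁻¹ * (Xᵀ * Y))
    (S : Matrix (Fin 2) (Fin 2) ℝ)
    (hS : S = (n : ℝ)⁻¹ • ((Y - X * Θ0)ᵀ * (Y - X * Θ0)))
    (hSpd : S.PosDef)
    (ℓ : ℝ → ℝ → ℝ → ℝ → ℝ → ℝ → ℝ)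
    (hℓ : ℓ = fun A C B σ1 σ2 δ =>
      -(n : ℝ) * Real.log (!![σ1 ^ 2, δ * σ1 * σ2; δ * σ1 * σ2, σ2 ^ 2] :
          Matrix (Fin 2) (Fin 2) ℝ).det -
        Matrix.trace ((Y - X * !![A, C; 0, B]) *
          (!![σ1 ^ 2, δ * σ1 * σ2; δ * σ1 * σ2, σ2 ^ 2] : Matrix (Fin 2) (Fin 2) ℝ)⁻¹ *
          (Y - X * !![A, C; 0, B])ᵀ)) :
    ∀ δ₁ ∈ Set.Ioo (-1 : ℝ) 1, ∀ δ₂ ∈ Set.Ioo (-1 : ℝ) 1,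
      sSup {x : ℝ | ∃ A C B σ1 σ2 : ℝ, 0 < σ1 ∧ 0 < σ2 ∧ x = ℓ A C B σ1 σ2 δ₁} =
        sSup {x : ℝ | ∃ A C B σ1 σ2 : ℝ, 0 < σ1 ∧ 0 < σ2 ∧ x = ℓ A C B σ1 σ2 δ₂} :=
  stmt_15_general Z M R Y X hY hX ℓ hℓ
end
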